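/- (Proposition 6, case a < 0.) Suppose π(θ, e) = π₀(e) − θ·(a e + b) with a < 0, for a twice continuously differentiable, strictly concave π₀ : E → ℝ, with π(θ,0) < π(θ,ē) for all θ ∈ Θ, and the density f is continuously differentiable and strictly positive on the interior of Θ. If there exists θ_▲ ∈ Θ such that e̲(θ) = ē for all θ ∈ [θ_▲, θ̄] and f is nondecreasing on [θ̲, θ_▲], then full disclosure Pareto dominates every other policy: for every admissible policy d, Π(d) ≤ Π(d_id) and Γ(d) ≥ Γ(d_id); consequently, any admissible efficient policy d satisfies Π(d) = Π(d_id) and Γ(d) = Γ(d_id). -/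

import Mathlib

open Set MeasureTheory

noncomputable section

/-- The set of belief-compatible emission levels under disclosure policy `d`,
on the emission space `E = [0, ebar]`. -/
def BCset (ebar : ℝ) (d : ℝ → ℝ) : Set ℝ :=
  {e | e ∈ Icc 0 ebar ∧ ∀ e' ∈ Icc 0 ebar, d e' = d e → e' ≤ e}

/-- `d` is more transparent than `d'`: the fibers of `d` refine those of `d'`. -/
def MoreTransparent (ebar : ℝ) (d d' : ℝ → ℝ) : Prop :=
  ∀ e₁ ∈ Icc (0:ℝ) ebar, ∀ e₂ ∈ Icc (0:ℝ) ebar, d e₁ = d e₂ → d' e₁ = d' e₂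

/-- A policy is admissible if for every type `θ ∈ Θ`, the profit `π θ ·`
attains a maximum on the belief-compatible set. -/
def Admissible (ebar θl θh : ℝ) (π : ℝ → ℝ → ℝ) (d : ℝ → ℝ) : Prop :=
  ∀ θ ∈ Icc θl θh, ∃ e ∈ BCset ebar d, ∀ e' ∈ BCset ebar d, π θ e' ≤ π θ e

/-- The maximized profit `π_d(θ)` of type `θ` under policy `d`. -/
def profitFn (ebar : ℝ) (π : ℝ → ℝ → ℝ) (d : ℝ → ℝ) (θ : ℝ) : ℝ :=
  sSup (π θ '' BCset ebar d)

/-- The equilibrium emission `γ_d(θ)`: the least maximizer of `π θ ·` on the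
belief-compatible set. -/
def emissionFn (ebar : ℝ) (π : ℝ → ℝ → ℝ) (d : ℝ → ℝ) (θ : ℝ) : ℝ :=
  sInf {e | e ∈ BCset ebar d ∧ ∀ e' ∈ BCset ebar d, π θ e' ≤ π θ e}

/-- Expected profit `Π(d) = ∫ π_d(θ) f(θ) dθ`. -/
def ExpProfit (ebar θl θh : ℝ) (π : ℝ → ℝ → ℝ) (f : ℝ → ℝ) (d : ℝ → ℝ) : ℝ :=
  ∫ θ in Icc θl θh, profitFn ebar π d θ * f θ

/-- Expected emission `Γ(d) = ∫ γ_d(θ) f(θ) dθ`. -/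
def ExpEmission (ebar θl θh : ℝ) (π : ℝ → ℝ → ℝ) (f : ℝ → ℝ) (d : ℝ → ℝ) : ℝ :=
  ∫ θ in Icc θl θh, emissionFn ebar π d θ * f θ

/-- `d` is Pareto efficient: no admissible policy yields weakly higher expected
profit and weakly lower expected emission with at least one strict. -/
def Efficient (ebar θl θh : ℝ) (π : ℝ → ℝ → ℝ) (f : ℝ → ℝ) (d : ℝ → ℝ) : Prop :=
  ¬ ∃ d' : ℝ → ℝ, Admissible ebar θl θh π d' ∧
      ExpProfit ebar θl θh π f d ≤ ExpProfit ebar θl θh π f d' ∧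
      ExpEmission ebar θl θh π f d' ≤ ExpEmission ebar θl θh π f d ∧
      (ExpProfit ebar θl θh π f d < ExpProfit ebar θl θh π f d' ∨
        ExpEmission ebar θl θh π f d' < ExpEmission ebar θl θh π f d)

/-!
Under a policy `d` the profit `π_d(θ)` is a maximum of functions of `θ` that are affine with
slopes `-(a e + b)`; hence `-(a γ_d(θ) + b)` is a subgradient of `π_d`, the emission `γ_d` is
nondecreasing (as `a < 0`), and `π_d` is differentiable wherever `γ_d` is continuous, i.e. off a
countable set. Full disclosure maximises over all of `E`, so `W = π_id - π_d ≥ 0`, while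
`W(θ_▲) = 0` because every policy lets the types above `θ_▲` choose `ē`. Integrating
`W' = a (γ_d - γ_id)` over `[u, θ_▲]` shows that every tail integral `∫_u^{θ_▲} (γ_d - γ_id)` is
nonnegative, and an integration by parts against the nondecreasing density turns this into
`∫ (γ_d - γ_id) f ≥ 0`; above `θ_▲` both emissions equal `ē`.
-/

open Filter Topology intervalIntegral

theorem StrictConcaveOn.isLeast_sInf_maximizers {C S : Set ℝ} {g : ℝ → ℝ}
    (hg : StrictConcaveOn ℝ C g) (hSC : S ⊆ C) (hne : ∃ e ∈ S, ∀ e' ∈ S, g e' ≤ g e) :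
    IsLeast {e | e ∈ S ∧ ∀ e' ∈ S, g e' ≤ g e} (sInf {e | e ∈ S ∧ ∀ e' ∈ S, g e' ≤ g e}) := by
  set M := {e | e ∈ S ∧ ∀ e' ∈ S, g e' ≤ g e}
  have no_three : ∀ x ∈ M, ∀ y ∈ M, ∀ z ∈ M, x < y → y < z → False := by
    intro x hx y hy z hz hxy hyz
    have hmid : min (g x) (g z) < g y :=
      hg.lt_on_openSegment (hSC hx.1) (hSC hz.1) (hxy.trans hyz).ne
        (by rw [openSegment_eq_Ioo (hxy.trans hyz)]; exact ⟨hxy, hyz⟩)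
    exact hmid.not_ge (le_min (hx.2 y hy.1) (hz.2 y hy.1))
  obtain ⟨e₀, he₀⟩ := hne
  obtain ⟨m, hm⟩ : ∃ m, IsLeast M m := by
    by_cases h : ∃ e₁ ∈ M, e₁ < e₀
    · obtain ⟨e₁, he₁, h₁₀⟩ := h
      exact ⟨e₁, he₁, fun e he => not_lt.1 fun he₁' => no_three e he e₁ he₁ e₀ he₀ he₁' h₁₀⟩
    · push Not at h
      exact ⟨e₀, he₀, h⟩
  rwa [hm.csInf_eq]

theorem StrictConcaveOn.sub_affine {π0 : ℝ → ℝ} {s : Set ℝ} (h : StrictConcaveOn ℝ s π0)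
    (θ a b : ℝ) : StrictConcaveOn ℝ s (fun e => π0 e - θ * (a * e + b)) := by
  refine h.sub_convexOn ⟨h.1, fun x _ y _ p q _ _ hpq => le_of_eq ?_⟩
  simp only [smul_eq_mul]
  linear_combination (-(θ * b)) * hpq

theorem continuousOn_of_subgradient {V s : ℝ → ℝ} {U : Set ℝ} {C : ℝ}
    (hsub : ∀ u ∈ U, ∀ w ∈ U, V w + (u - w) * s w ≤ V u) (hs : ∀ w ∈ U, |s w| ≤ C) :
    ContinuousOn V U := by
  refine (LipschitzOnWith.of_dist_le_mul (K := C.toNNReal) fun u hu w hw => ?_).continuousOn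
  have hw' := abs_le.1 ((abs_mul (u - w) (s w)).trans_le
    (mul_le_mul_of_nonneg_left (hs w hw) (abs_nonneg _)))
  have hu' := abs_le.1 ((abs_mul (w - u) (s u)).trans_le
    (mul_le_mul_of_nonneg_left (hs u hu) (abs_nonneg _)))
  rw [abs_sub_comm] at hu'
  rw [Real.dist_eq, Real.dist_eq, abs_le]
  have hC : C ≤ C.toNNReal := Real.le_coe_toNNReal C
  have := hsub u hu w hw
  have := hsub w hw u hu
  constructor <;> nlinarith [abs_nonneg (u - w)]

theorem hasDerivAt_of_subgradient {V s : ℝ → ℝ} {U : Set ℝ} {t : ℝ} (hU : U ∈ 𝓝 t)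
    (hsub : ∀ u ∈ U, ∀ w ∈ U, V w + (u - w) * s w ≤ V u) (hs : ContinuousAt s t) :
    HasDerivAt V (s t) t := by
  have ht : t ∈ U := mem_of_mem_nhds hU
  have hslope : ∀ u ∈ U, u ≠ t →
      min (s t) (s u) ≤ slope V t u ∧ slope V t u ≤ max (s t) (s u) := by
    intro u hu hne
    have h₁ := hsub u hu t ht
    have h₂ := hsub t ht u hu
    rw [slope_def_field]
    rcases hne.lt_or_gt with hlt | hgt
    · exact ⟨min_le_of_right_le ((le_div_iff_of_neg (sub_neg.2 hlt)).2 (by linarith)),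
        le_max_of_le_left ((div_le_iff_of_neg (sub_neg.2 hlt)).2 (by linarith))⟩
    · exact ⟨min_le_of_left_le ((le_div_iff₀ (sub_pos.2 hgt)).2 (by linarith)),
        le_max_of_le_right ((div_le_iff₀ (sub_pos.2 hgt)).2 (by linarith))⟩
  have hlim : Tendsto s (𝓝[≠] t) (𝓝 (s t)) := hs.tendsto.mono_left nhdsWithin_le_nhds
  have hmin : Tendsto (fun u => min (s t) (s u)) (𝓝[≠] t) (𝓝 (s t)) := by
    simpa using (tendsto_const_nhds (x := s t)).min hlim
  have hmax : Tendsto (fun u => max (s t) (s u)) (𝓝[≠] t) (𝓝 (s t)) := by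
    simpa using (tendsto_const_nhds (x := s t)).max hlim
  have hnear : ∀ᶠ u in 𝓝[≠] t, u ∈ U ∧ u ≠ t :=
    Eventually.and (mem_nhdsWithin_of_mem_nhds hU) self_mem_nhdsWithin
  rw [hasDerivAt_iff_tendsto_slope]
  exact tendsto_of_tendsto_of_tendsto_of_le_of_le' hmin hmax
    (hnear.mono fun u hu => (hslope u hu.1 hu.2).1) (hnear.mono fun u hu => (hslope u hu.1 hu.2).2)

theorem integral_mul_eq_sub_add_integral_tail_mul {x y r : ℝ} {h f f' : ℝ → ℝ} {s : Set ℝ}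
    (hxy : x ≤ y) (hyr : y ≤ r) (hs : s.Countable) (hh : IntegrableOn h (Icc x r))
    (hcont : ∀ t ∈ Ioo x y \ s, ContinuousAt h t) (hf : ∀ t ∈ Icc x y, HasDerivAt f (f' t) t)
    (hf' : ContinuousOn f' (Icc x y)) :
    ∫ t in x..y, h t * f t = (∫ t in x..r, h t) * f x - (∫ t in y..r, h t) * f y
      + ∫ t in x..y, (∫ u in t..r, h u) * f' t := by
  set H : ℝ → ℝ := fun u => ∫ t in u..r, h t
  have hxr : x ≤ r := hxy.trans hyr
  have hHcont : ContinuousOn H (Icc x y) := by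
    have := continuousOn_primitive_interval_left (a := x) (b := r) (by rwa [uIcc_of_le hxr])
    exact (uIcc_of_le hxr ▸ this).mono (Icc_subset_Icc_right hyr)
  have hHd : ∀ t ∈ Ioo x y \ s, HasDerivAt H (-h t) t := fun t ht =>
    integral_hasDerivAt_left
      (hh.mono_set (uIcc_subset_Icc ⟨ht.1.1.le, ht.1.2.le.trans hyr⟩
        (right_mem_Icc.2 hxr))).intervalIntegrable
      (AEStronglyMeasurable.stronglyMeasurableAtFilter_of_mem hh.aestronglyMeasurable
        (Icc_mem_nhds ht.1.1 (ht.1.2.trans_le hyr)))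
      (hcont t ht)
  have hfcont : ContinuousOn f (Icc x y) := fun t ht => (hf t ht).continuousAt.continuousWithinAt
  have hhf : IntervalIntegrable (fun t => -h t * f t) volume x y :=
    (hh.mono_set (uIcc_subset_Icc (left_mem_Icc.2 hxr) ⟨hxy, hyr⟩)).intervalIntegrable.neg
      |>.mul_continuousOn (uIcc_of_le hxy ▸ hfcont)
  have hHf' : IntervalIntegrable (fun t => H t * f' t) volume x y :=
    (hHcont.mul hf').intervalIntegrable_of_Icc hxy
  have hparts : ∫ t in x..y, (-h t * f t + H t * f' t) = H y * f y - H x * f x :=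
    integral_eq_of_hasDerivAt_off_countable_of_le _ _ hxy hs (hHcont.mul hfcont)
      (fun t ht => (hHd t ht).mul (hf t (Ioo_subset_Icc_self ht.1))) (hhf.add hHf')
  rw [integral_add hhf hHf'] at hparts
  simp only [neg_mul, intervalIntegral.integral_neg] at hparts
  linarith

theorem neg_mul_le_integral_mul_of_tail_integral_nonneg {l r x y : ℝ} {h f : ℝ → ℝ}
    {s : Set ℝ} (hs : s.Countable) (hh : IntegrableOn h (Icc l r))
    (hcont : ∀ t ∈ Ioo l r \ s, ContinuousAt h t) (hf : ContDiffOn ℝ 1 f (Ioo l r))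
    (hf0 : ∀ t ∈ Ioo l r, 0 ≤ f t) (hmono : MonotoneOn f (Icc l r))
    (htail : ∀ u ∈ Icc l r, 0 ≤ ∫ t in u..r, h t) (hxl : l < x) (hxy : x ≤ y) (hyr : y < r) :
    -((∫ t in y..r, h t) * f r) ≤ ∫ t in x..y, h t * f t := by
  have hxyI : Icc x y ⊆ Ioo l r := fun t ht => ⟨hxl.trans_le ht.1, ht.2.trans_lt hyr⟩
  have hy : y ∈ Icc l r := ⟨hxl.le.trans hxy, hyr.le⟩
  have hf'0 : ∀ t ∈ Ioo l r, 0 ≤ deriv f t := fun t ht => by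
    rw [← derivWithin_of_isOpen isOpen_Ioo ht]
    exact (hmono.mono Ioo_subset_Icc_self).derivWithin_nonneg
  rw [integral_mul_eq_sub_add_integral_tail_mul hxy hyr.le hs
    (hh.mono_set (Icc_subset_Icc_left hxl.le))
    (fun t ht => hcont t ⟨hxyI (Ioo_subset_Icc_self ht.1), ht.2⟩)
    (fun t ht => ((hf.differentiableOn one_ne_zero).differentiableAt
      (isOpen_Ioo.mem_nhds (hxyI ht))).hasDerivAt)
    ((hf.continuousOn_deriv_of_isOpen isOpen_Ioo le_rfl).mono hxyI)]
  have hx : 0 ≤ (∫ t in x..r, h t) * f x :=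
    mul_nonneg (htail x ⟨hxl.le, hxy.trans hyr.le⟩) (hf0 x (hxyI (left_mem_Icc.2 hxy)))
  have hy : (∫ t in y..r, h t) * f y ≤ (∫ t in y..r, h t) * f r :=
    mul_le_mul_of_nonneg_left (hmono hy (right_mem_Icc.2 (hy.1.trans hy.2)) hy.2) (htail y hy)
  have hmid : 0 ≤ ∫ t in x..y, (∫ u in t..r, h u) * deriv f t :=
    integral_nonneg hxy fun t ht =>
      mul_nonneg (htail t (Ioo_subset_Icc_self (hxyI ht))) (hf'0 t (hxyI ht))
  linarith

/-- `f` need not be differentiable, or even continuous, at `l` and `r`: the integration by parts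
is done on `[x, y] ⊂ (l, r)` and the endpoints are reached by continuity of the integrals. -/
theorem integral_mul_nonneg_of_tail_integral_nonneg {l r : ℝ} {h f : ℝ → ℝ} {s : Set ℝ}
    (hlr : l ≤ r) (hs : s.Countable) (hh : IntegrableOn h (Icc l r))
    (hhf : IntegrableOn (fun t => h t * f t) (Icc l r))
    (hcont : ∀ t ∈ Ioo l r \ s, ContinuousAt h t) (hf : ContDiffOn ℝ 1 f (Ioo l r))
    (hf0 : ∀ t ∈ Ioo l r, 0 ≤ f t) (hmono : MonotoneOn f (Icc l r))
    (htail : ∀ u ∈ Icc l r, 0 ≤ ∫ t in u..r, h t) :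
    0 ≤ ∫ t in l..r, h t * f t := by
  rcases hlr.eq_or_lt with rfl | hlr
  · simp
  have hleft : ∀ y ∈ Ioo l r, -((∫ t in y..r, h t) * f r) ≤ ∫ t in l..y, h t * f t := by
    intro y hy
    have hcont_left := continuousOn_primitive_interval_left (b := y)
      (hhf.mono_set (uIcc_subset_Icc (left_mem_Icc.2 hlr.le) (Ioo_subset_Icc_self hy)))
    refine ContinuousWithinAt.closure_le (s := Ioo l y) (f := fun _ => -((∫ t in y..r, h t) * f r))
      (g := fun x => ∫ t in x..y, h t * f t) ?_ continuousWithinAt_const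
      ((hcont_left l left_mem_uIcc).mono (Ioo_subset_Icc_self.trans Icc_subset_uIcc))
      fun x hx => neg_mul_le_integral_mul_of_tail_integral_nonneg hs hh hcont hf hf0 hmono
        htail hx.1 hx.2.le hy.2
    rw [closure_Ioo hy.1.ne]
    exact left_mem_Icc.2 hy.1.le
  have hH := continuousOn_primitive_interval_left (a := l) (b := r)
    (by rwa [uIcc_of_le hlr.le] : IntegrableOn h (uIcc l r))
  have hP := continuousOn_primitive_interval (a := l) (b := r)
    (by rwa [uIcc_of_le hlr.le] : IntegrableOn (fun t => h t * f t) (uIcc l r))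
  have := ContinuousWithinAt.closure_le (s := Ioo l r) (x := r)
    (f := fun y => -((∫ t in y..r, h t) * f r)) (g := fun y => ∫ t in l..y, h t * f t)
    (by rw [closure_Ioo hlr.ne]; exact right_mem_Icc.2 hlr.le)
    (((hH r right_mem_uIcc).mul continuousWithinAt_const).neg.mono
      (Ioo_subset_Icc_self.trans Icc_subset_uIcc))
    ((hP r right_mem_uIcc).mono (Ioo_subset_Icc_self.trans Icc_subset_uIcc)) hleft
  simpa using this

namespace Disclosure

variable {ebar θl θh a b : ℝ} {π0 : ℝ → ℝ} {π : ℝ → ℝ → ℝ} {d d₁ d₂ : ℝ → ℝ} {θ : ℝ}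

theorem BCset_subset_Icc : BCset ebar d ⊆ Icc 0 ebar := fun _ he => he.1

theorem ebar_mem_BCset (h : 0 ≤ ebar) : ebar ∈ BCset ebar d :=
  ⟨⟨h, le_rfl⟩, fun _ he _ => he.2⟩

theorem BCset_id : BCset ebar (fun e => e) = Icc 0 ebar :=
  Subset.antisymm BCset_subset_Icc fun _ he => ⟨he, fun _ _ h => h.le⟩

theorem admissible_id (h : 0 ≤ ebar) (hπ : ∀ θ ∈ Icc θl θh, ContinuousOn (π θ) (Icc 0 ebar)) :
    Admissible ebar θl θh π (fun e => e) := by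
  intro θ hθ
  rw [BCset_id]
  exact isCompact_Icc.exists_isMaxOn (nonempty_Icc.2 h) (hπ θ hθ)

theorem isLeast_emissionFn (hconc : StrictConcaveOn ℝ (Icc 0 ebar) (π θ))
    (hd : Admissible ebar θl θh π d) (hθ : θ ∈ Icc θl θh) :
    IsLeast {e | e ∈ BCset ebar d ∧ ∀ e' ∈ BCset ebar d, π θ e' ≤ π θ e}
      (emissionFn ebar π d θ) :=
  hconc.isLeast_sInf_maximizers BCset_subset_Icc (hd θ hθ)

theorem apply_le_profitFn (hd : Admissible ebar θl θh π d) (hθ : θ ∈ Icc θl θh) {e : ℝ}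
    (he : e ∈ BCset ebar d) : π θ e ≤ profitFn ebar π d θ := by
  obtain ⟨e', -, hmax⟩ := hd θ hθ
  exact le_csSup ⟨π θ e', forall_mem_image.2 hmax⟩ (mem_image_of_mem _ he)

theorem profitFn_eq_apply_emissionFn (hconc : StrictConcaveOn ℝ (Icc 0 ebar) (π θ))
    (hd : Admissible ebar θl θh π d) (hθ : θ ∈ Icc θl θh) :
    profitFn ebar π d θ = π θ (emissionFn ebar π d θ) := by
  have hγ := (isLeast_emissionFn hconc hd hθ).1
  exact IsGreatest.csSup_eq ⟨mem_image_of_mem _ hγ.1, forall_mem_image.2 hγ.2⟩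

theorem profitFn_le_profitFn_id (hconc : StrictConcaveOn ℝ (Icc 0 ebar) (π θ))
    (hd : Admissible ebar θl θh π d) (hid : Admissible ebar θl θh π (fun e => e))
    (hθ : θ ∈ Icc θl θh) : profitFn ebar π d θ ≤ profitFn ebar π (fun e => e) θ := by
  rw [profitFn_eq_apply_emissionFn hconc hd hθ]
  exact apply_le_profitFn hid hθ (BCset_id ▸ BCset_subset_Icc (isLeast_emissionFn hconc hd hθ).1.1)

theorem emissionFn_eq_ebar (h : 0 ≤ ebar) (hconc : StrictConcaveOn ℝ (Icc 0 ebar) (π θ))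
    (hd : Admissible ebar θl θh π d) (hθ : θ ∈ Icc θl θh)
    (htop : ebar ∈ lowerBounds {e ∈ Icc 0 ebar | π θ ebar ≤ π θ e}) :
    emissionFn ebar π d θ = ebar := by
  have hγ := (isLeast_emissionFn hconc hd hθ).1
  exact le_antisymm (BCset_subset_Icc hγ.1).2
    (htop ⟨BCset_subset_Icc hγ.1, hγ.2 ebar (ebar_mem_BCset h)⟩)

theorem profitFn_subgradient (hπ : ∀ θ e, π θ e = π0 e - θ * (a * e + b))
    (hconc : StrictConcaveOn ℝ (Icc 0 ebar) (π θ)) (hd : Admissible ebar θl θh π d)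
    (hθ : θ ∈ Icc θl θh) {θ' : ℝ} (hθ' : θ' ∈ Icc θl θh) :
    profitFn ebar π d θ + (θ' - θ) * -(a * emissionFn ebar π d θ + b) ≤ profitFn ebar π d θ' := by
  have hγ := isLeast_emissionFn hconc hd hθ
  calc profitFn ebar π d θ + (θ' - θ) * -(a * emissionFn ebar π d θ + b)
      = π θ' (emissionFn ebar π d θ) := by
        rw [profitFn_eq_apply_emissionFn hconc hd hθ, hπ, hπ]; ring
    _ ≤ profitFn ebar π d θ' := apply_le_profitFn hd hθ' hγ.1.1

theorem monotoneOn_emissionFn (ha : a < 0) (hπ : ∀ θ e, π θ e = π0 e - θ * (a * e + b))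
    (hconc : ∀ θ, StrictConcaveOn ℝ (Icc 0 ebar) (π θ)) (hd : Admissible ebar θl θh π d) :
    MonotoneOn (emissionFn ebar π d) (Icc θl θh) := by
  intro θ₁ h₁ θ₂ h₂ h₁₂
  rcases h₁₂.eq_or_lt with rfl | h₁₂
  · exact le_rfl
  have hγ₁ := (isLeast_emissionFn (hconc θ₁) hd h₁).1
  have hγ₂ := (isLeast_emissionFn (hconc θ₂) hd h₂).1
  have hrev₁ := hγ₁.2 _ hγ₂.1
  have hrev₂ := hγ₂.2 _ hγ₁.1
  rw [hπ, hπ] at hrev₁ hrev₂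
  by_contra hlt
  nlinarith [mul_pos (mul_pos (neg_pos.2 ha) (sub_pos.2 h₁₂)) (sub_pos.2 (not_le.1 hlt))]

theorem continuousOn_profitFn (hπ : ∀ θ e, π θ e = π0 e - θ * (a * e + b))
    (hconc : ∀ θ, StrictConcaveOn ℝ (Icc 0 ebar) (π θ)) (hd : Admissible ebar θl θh π d) :
    ContinuousOn (profitFn ebar π d) (Icc θl θh) := by
  refine continuousOn_of_subgradient (C := |a| * ebar + |b|)
    (fun _ hθ' θ hθ => profitFn_subgradient hπ (hconc θ) hd hθ hθ') fun θ hθ => ?_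
  have hγ := BCset_subset_Icc (isLeast_emissionFn (hconc θ) hd hθ).1.1
  rw [abs_neg]
  refine (abs_add_le _ _).trans ?_
  rw [abs_mul, abs_of_nonneg hγ.1]
  gcongr
  exact hγ.2

theorem hasDerivAt_profitFn (hπ : ∀ θ e, π θ e = π0 e - θ * (a * e + b))
    (hconc : ∀ θ, StrictConcaveOn ℝ (Icc 0 ebar) (π θ)) (hd : Admissible ebar θl θh π d)
    (hθ : θ ∈ Ioo θl θh) (hγ : ContinuousAt (emissionFn ebar π d) θ) :
    HasDerivAt (profitFn ebar π d) (-(a * emissionFn ebar π d θ + b)) θ :=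
  hasDerivAt_of_subgradient (s := fun θ => -(a * emissionFn ebar π d θ + b))
    (Icc_mem_nhds hθ.1 hθ.2) (fun _ hθ' θ hθ => profitFn_subgradient hπ (hconc θ) hd hθ hθ')
    ((hγ.const_mul a).add_const b).neg

theorem countable_not_continuousAt_emissionFn (ha : a < 0)
    (hπ : ∀ θ e, π θ e = π0 e - θ * (a * e + b))
    (hconc : ∀ θ, StrictConcaveOn ℝ (Icc 0 ebar) (π θ)) (hd : Admissible ebar θl θh π d) :
    {θ ∈ Ioo θl θh | ¬ContinuousAt (emissionFn ebar π d) θ}.Countable := by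
  refine Countable.mono ?_
    (monotoneOn_emissionFn ha hπ hconc hd).countable_not_continuousWithinAt
  rintro θ ⟨hθ, hc⟩
  exact ⟨Ioo_subset_Icc_self hθ, fun h => hc (h.continuousAt (Icc_mem_nhds hθ.1 hθ.2))⟩

theorem integral_emissionFn_sub_nonneg (ha : a < 0) (hπ : ∀ θ e, π θ e = π0 e - θ * (a * e + b))
    (hconc : ∀ θ, StrictConcaveOn ℝ (Icc 0 ebar) (π θ)) (hd₁ : Admissible ebar θl θh π d₁)
    (hd₂ : Admissible ebar θl θh π d₂) {u v : ℝ} (huv : u ≤ v) (hsub : Icc u v ⊆ Icc θl θh)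
    (hle : ∀ θ ∈ Icc u v, profitFn ebar π d₁ θ ≤ profitFn ebar π d₂ θ)
    (heq : profitFn ebar π d₁ v = profitFn ebar π d₂ v) :
    0 ≤ ∫ θ in u..v, (emissionFn ebar π d₁ θ - emissionFn ebar π d₂ θ) := by
  have hIoo : Ioo u v ⊆ Ioo θl θh := fun θ hθ =>
    ⟨(hsub ⟨le_rfl, huv⟩).1.trans_lt hθ.1, hθ.2.trans_le (hsub ⟨huv, le_rfl⟩).2⟩
  have hint : IntervalIntegrable (fun θ => a * (emissionFn ebar π d₁ θ - emissionFn ebar π d₂ θ))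
      volume u v := by
    rw [← uIcc_of_le huv] at hsub
    exact (((monotoneOn_emissionFn ha hπ hconc hd₁).mono hsub).intervalIntegrable.sub
      ((monotoneOn_emissionFn ha hπ hconc hd₂).mono hsub).intervalIntegrable).const_mul a
  have hFTC := integral_eq_of_hasDerivAt_off_countable_of_le
    (fun θ => profitFn ebar π d₂ θ - profitFn ebar π d₁ θ) _ huv
    ((countable_not_continuousAt_emissionFn ha hπ hconc hd₁).union
      (countable_not_continuousAt_emissionFn ha hπ hconc hd₂))
    (((continuousOn_profitFn hπ hconc hd₂).sub (continuousOn_profitFn hπ hconc hd₁)).mono hsub)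
    (fun θ hθ => ?_) hint
  · rw [intervalIntegral.integral_const_mul, heq, sub_self] at hFTC
    have := sub_nonneg.2 (hle u ⟨le_rfl, huv⟩)
    nlinarith
  · obtain ⟨hθ, hθS⟩ := hθ
    rw [mem_union, not_or] at hθS
    have hderiv : ∀ {d}, Admissible ebar θl θh π d →
        θ ∉ {θ ∈ Ioo θl θh | ¬ContinuousAt (emissionFn ebar π d) θ} →
        HasDerivAt (profitFn ebar π d) (-(a * emissionFn ebar π d θ + b)) θ := fun hd h =>
      hasDerivAt_profitFn hπ hconc hd (hIoo hθ) (not_not.1 fun hc => h ⟨hIoo hθ, hc⟩)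
    exact ((hderiv hd₂ hθS.2).sub (hderiv hd₁ hθS.1)).congr_deriv (by ring)

theorem expProfit_le_expProfit_id {f : ℝ → ℝ}
    (hconc : ∀ θ, StrictConcaveOn ℝ (Icc 0 ebar) (π θ)) (hd : Admissible ebar θl θh π d)
    (hid : Admissible ebar θl θh π (fun e => e)) (hf0 : ∀ θ ∈ Icc θl θh, 0 ≤ f θ)
    (hint : IntegrableOn (fun θ => profitFn ebar π d θ * f θ) (Icc θl θh))
    (hint_id : IntegrableOn (fun θ => profitFn ebar π (fun e => e) θ * f θ) (Icc θl θh)) :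
    ExpProfit ebar θl θh π f d ≤ ExpProfit ebar θl θh π f (fun e => e) :=
  setIntegral_mono_on hint hint_id measurableSet_Icc fun θ hθ =>
    mul_le_mul_of_nonneg_right (profitFn_le_profitFn_id (hconc θ) hd hid hθ) (hf0 θ hθ)

theorem expEmission_le_of_profitFn_le (ha : a < 0)
    (hπ : ∀ θ e, π θ e = π0 e - θ * (a * e + b))
    (hconc : ∀ θ, StrictConcaveOn ℝ (Icc 0 ebar) (π θ)) (hd₁ : Admissible ebar θl θh π d₁)
    (hd₂ : Admissible ebar θl θh π d₂) {θb : ℝ} (hθb : θb ∈ Icc θl θh)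
    (hle : ∀ θ ∈ Icc θl θb, profitFn ebar π d₁ θ ≤ profitFn ebar π d₂ θ)
    (hγ : ∀ θ ∈ Icc θb θh, emissionFn ebar π d₁ θ = emissionFn ebar π d₂ θ) {f : ℝ → ℝ}
    (hf : ContDiffOn ℝ 1 f (Ioo θl θb)) (hf0 : ∀ θ ∈ Ioo θl θb, 0 ≤ f θ)
    (hmono : MonotoneOn f (Icc θl θb))
    (hint₁ : IntegrableOn (fun θ => emissionFn ebar π d₁ θ * f θ) (Icc θl θh))
    (hint₂ : IntegrableOn (fun θ => emissionFn ebar π d₂ θ * f θ) (Icc θl θh)) :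
    ExpEmission ebar θl θh π f d₂ ≤ ExpEmission ebar θl θh π f d₁ := by
  set h : ℝ → ℝ := fun θ => emissionFn ebar π d₁ θ - emissionFn ebar π d₂ θ
  have hsub : Icc θl θb ⊆ Icc θl θh := Icc_subset_Icc_right hθb.2
  have hdiff : ExpEmission ebar θl θh π f d₁ - ExpEmission ebar θl θh π f d₂
      = ∫ θ in θl..θb, h θ * f θ := by
    rw [ExpEmission, ExpEmission, ← integral_sub hint₁ hint₂,
      setIntegral_eq_of_subset_of_forall_sdiff_eq_zero measurableSet_Icc hsub,
      intervalIntegral.integral_of_le hθb.1, integral_Icc_eq_integral_Ioc]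
    · simp only [h, sub_mul]
    · intro θ hθ
      rw [hγ θ ⟨le_of_not_ge fun h' => hθ.2 ⟨hθ.1.1, h'⟩, hθ.1.2⟩, sub_self]
  have hh : IntegrableOn h (Icc θl θb) := by
    rw [← intervalIntegrable_iff_integrableOn_Icc_of_le hθb.1]
    rw [← uIcc_of_le hθb.1] at hsub
    exact ((monotoneOn_emissionFn ha hπ hconc hd₁).mono hsub).intervalIntegrable.sub
      ((monotoneOn_emissionFn ha hπ hconc hd₂).mono hsub).intervalIntegrable
  have hheq : profitFn ebar π d₁ θb = profitFn ebar π d₂ θb := by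
    rw [profitFn_eq_apply_emissionFn (hconc θb) hd₁ hθb,
      profitFn_eq_apply_emissionFn (hconc θb) hd₂ hθb, hγ θb ⟨le_rfl, hθb.2⟩]
  have hcont : ∀ θ ∈ Ioo θl θb \ ({θ ∈ Ioo θl θh | ¬ContinuousAt (emissionFn ebar π d₁) θ} ∪
      {θ ∈ Ioo θl θh | ¬ContinuousAt (emissionFn ebar π d₂) θ}), ContinuousAt h θ := by
    rintro θ ⟨hθ, hθS⟩
    have hθ' : θ ∈ Ioo θl θh := ⟨hθ.1, hθ.2.trans_le hθb.2⟩
    rw [mem_union, not_or] at hθS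
    exact (not_not.1 fun hc => hθS.1 ⟨hθ', hc⟩).sub (not_not.1 fun hc => hθS.2 ⟨hθ', hc⟩)
  have htail : ∀ u ∈ Icc θl θb, 0 ≤ ∫ θ in u..θb, h θ := fun u hu =>
    integral_emissionFn_sub_nonneg ha hπ hconc hd₁ hd₂ hu.2 ((Icc_subset_Icc_left hu.1).trans hsub)
      (fun θ hθ => hle θ ⟨hu.1.trans hθ.1, hθ.2⟩) hheq
  have hhf : IntegrableOn (fun θ => h θ * f θ) (Icc θl θb) :=
    ((hint₁.sub hint₂).mono_set hsub).congr_fun (fun _ _ => (sub_mul _ _ _).symm)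
      measurableSet_Icc
  rw [← sub_nonneg, hdiff]
  exact integral_mul_nonneg_of_tail_integral_nonneg hθb.1
    ((countable_not_continuousAt_emissionFn ha hπ hconc hd₁).union
      (countable_not_continuousAt_emissionFn ha hπ hconc hd₂)) hh hhf hcont hf hf0 hmono htail

theorem eq_of_efficient_of_dominates {f d' : ℝ → ℝ} (heff : Efficient ebar θl θh π f d)
    (hd' : Admissible ebar θl θh π d')
    (hprofit : ExpProfit ebar θl θh π f d ≤ ExpProfit ebar θl θh π f d')
    (hemission : ExpEmission ebar θl θh π f d' ≤ ExpEmission ebar θl θh π f d) :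
    ExpProfit ebar θl θh π f d = ExpProfit ebar θl θh π f d' ∧
      ExpEmission ebar θl θh π f d = ExpEmission ebar θl θh π f d' :=
  ⟨hprofit.antisymm (not_lt.1 fun hlt => heff ⟨d', hd', hprofit, hemission, Or.inl hlt⟩),
    (not_lt.1 fun hlt => heff ⟨d', hd', hprofit, hemission, Or.inr hlt⟩).antisymm hemission⟩

end Disclosure

open Disclosure in
theorem full_disclosure_only_efficient_neg_general (ebar θl θh : ℝ) (hebar : 0 < ebar)
    (π0 : ℝ → ℝ) (a b : ℝ) (ha : a < 0) (π : ℝ → ℝ → ℝ)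
    (hπ : ∀ θ e, π θ e = π0 e - θ * (a * e + b))
    (hπ0C2 : ContDiffOn ℝ 2 π0 (Icc 0 ebar))
    (hπ0conc : StrictConcaveOn ℝ (Icc 0 ebar) π0)
    (f : ℝ → ℝ)
    (hfC1 : ContDiffOn ℝ 1 f (Ioo θl θh))
    (hf0 : ∀ θ ∈ Icc θl θh, 0 ≤ f θ)
    (hint : ∀ d : ℝ → ℝ, Admissible ebar θl θh π d →
        IntegrableOn (fun θ => profitFn ebar π d θ * f θ) (Icc θl θh) ∧
        IntegrableOn (fun θ => emissionFn ebar π d θ * f θ) (Icc θl θh))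
    (elow : ℝ → ℝ)
    (helow : ∀ θ ∈ Icc θl θh,
        IsLeast {e ∈ Icc (0:ℝ) ebar | π θ ebar ≤ π θ e} (elow θ))
    (θblack : ℝ) (hθblack : θblack ∈ Icc θl θh)
    (hirr : ∀ θ ∈ Icc θblack θh, elow θ = ebar)
    (hmono : MonotoneOn f (Icc θl θblack)) :
    (∀ d : ℝ → ℝ, Admissible ebar θl θh π d →
        ExpProfit ebar θl θh π f d ≤ ExpProfit ebar θl θh π f (fun e => e) ∧
          ExpEmission ebar θl θh π f (fun e => e) ≤ ExpEmission ebar θl θh π f d) ∧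
      ∀ d : ℝ → ℝ, Admissible ebar θl θh π d → Efficient ebar θl θh π f d →
        ExpProfit ebar θl θh π f d = ExpProfit ebar θl θh π f (fun e => e) ∧
          ExpEmission ebar θl θh π f d = ExpEmission ebar θl θh π f (fun e => e) := by
  have hconc : ∀ θ, StrictConcaveOn ℝ (Icc 0 ebar) (π θ) := fun θ => by
    rw [show π θ = _ from funext (hπ θ)]
    exact hπ0conc.sub_affine θ a b
  have hid : Admissible ebar θl θh π (fun e => e) :=
    admissible_id hebar.le fun θ _ =>
      (hπ0C2.continuousOn.sub (by fun_prop)).congr fun e _ => hπ θ e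
  have hγ : ∀ d, Admissible ebar θl θh π d → ∀ θ ∈ Icc θblack θh,
      emissionFn ebar π d θ = ebar := fun d hd θ hθ => by
    have hθ' : θ ∈ Icc θl θh := ⟨hθblack.1.trans hθ.1, hθ.2⟩
    exact emissionFn_eq_ebar hebar.le (hconc θ) hd hθ' (hirr θ hθ ▸ (helow θ hθ').2)
  have hdom : ∀ d, Admissible ebar θl θh π d →
      ExpProfit ebar θl θh π f d ≤ ExpProfit ebar θl θh π f (fun e => e) ∧
        ExpEmission ebar θl θh π f (fun e => e) ≤ ExpEmission ebar θl θh π f d := fun d hd =>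
    ⟨expProfit_le_expProfit_id hconc hd hid hf0 (hint d hd).1 (hint _ hid).1,
      expEmission_le_of_profitFn_le ha hπ hconc hd hid hθblack
        (fun θ hθ => profitFn_le_profitFn_id (hconc θ) hd hid ⟨hθ.1, hθ.2.trans hθblack.2⟩)
        (fun θ hθ => (hγ d hd θ hθ).trans (hγ _ hid θ hθ).symm)
        (hfC1.mono (Ioo_subset_Ioo_right hθblack.2))
        (fun θ hθ => hf0 θ ⟨hθ.1.le, hθ.2.le.trans hθblack.2⟩) hmono (hint d hd).2 (hint _ hid).2⟩
  exact ⟨hdom, fun d hd heff =>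
    eq_of_efficient_of_dominates heff hid (hdom d hd).1 (hdom d hd).2⟩

/-- Proposition 6, case `a < 0`: if the high types are irresponsive
(`e̲ = ē` on `[θ_▲, θ̄]`) and `f` is nondecreasing on `[θ̲, θ_▲]`, then full disclosure
Pareto dominates every admissible policy. -/
theorem full_disclosure_only_efficient_neg (ebar θl θh : ℝ) (hebar : 0 < ebar)
    (hθ : θl ≤ θh)
    (π0 : ℝ → ℝ) (a b : ℝ) (ha : a < 0) (π : ℝ → ℝ → ℝ)
    (hπ : ∀ θ e, π θ e = π0 e - θ * (a * e + b))
    (hπ0C2 : ContDiffOn ℝ 2 π0 (Icc 0 ebar))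
    (hπ0conc : StrictConcaveOn ℝ (Icc 0 ebar) π0)
    (hIR : ∀ θ ∈ Icc θl θh, π θ 0 < π θ ebar)
    (f : ℝ → ℝ)
    (hfC1 : ContDiffOn ℝ 1 f (Ioo θl θh))
    (hfpos : ∀ θ ∈ Ioo θl θh, 0 < f θ)
    (hf0 : ∀ θ ∈ Icc θl θh, 0 ≤ f θ)
    (hf1 : (∫ θ in Icc θl θh, f θ) = 1)
    (hint : ∀ d : ℝ → ℝ, Admissible ebar θl θh π d →
        IntegrableOn (fun θ => profitFn ebar π d θ * f θ) (Icc θl θh) ∧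
        IntegrableOn (fun θ => emissionFn ebar π d θ * f θ) (Icc θl θh))
    (elow : ℝ → ℝ)
    (helow : ∀ θ ∈ Icc θl θh,
        IsLeast {e ∈ Icc (0:ℝ) ebar | π θ ebar ≤ π θ e} (elow θ))
    (θblack : ℝ) (hθblack : θblack ∈ Icc θl θh)
    (hirr : ∀ θ ∈ Icc θblack θh, elow θ = ebar)
    (hmono : MonotoneOn f (Icc θl θblack)) :
    (∀ d : ℝ → ℝ, Admissible ebar θl θh π d →
        ExpProfit ebar θl θh π f d ≤ ExpProfit ebar θl θh π f (fun e => e) ∧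
          ExpEmission ebar θl θh π f (fun e => e) ≤ ExpEmission ebar θl θh π f d) ∧
      ∀ d : ℝ → ℝ, Admissible ebar θl θh π d → Efficient ebar θl θh π f d →
        ExpProfit ebar θl θh π f d = ExpProfit ebar θl θh π f (fun e => e) ∧
          ExpEmission ebar θl θh π f d = ExpEmission ebar θl θh π f (fun e => e) :=
  full_disclosure_only_efficient_neg_general ebar θl θh hebar π0 a b ha π hπ hπ0C2 hπ0conc f hfC1
    hf0 hint elow helow θblack hθblack hirr hmono
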